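/- In the setting of the previous two bounds, let C > 1 and n, εₙ be such that exp(−C·n·εₙ²) ≤ (1/2)·E / max(G, 1). Define Mₙ² = 2C·n·εₙ² and αₙ = exp(−2C·n·εₙ²), and Bₙ = {x : ‖x‖_H ≤ Mₙ and f(x) ≥ αₙ}. Then μ(Bₙᶜ) ≤ exp(−C·n·εₙ²). -/

import Mathlib

open MeasureTheory Real

/-!
Split `Bₙᶜ` into `{‖x‖_H > Mₙ}` and `{f < αₙ}`. On the first set `f ≤ 1 ≤ exp(‖x‖_H² - Mₙ²)`,
so its `f`-mass is at most `G exp(-Mₙ²)`; on the second it is at most `αₙ`. Both `exp(-Mₙ²)`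
and `αₙ` equal `t²` with `t = exp(-Cnεₙ²)`, and `t · max(G, 1) ≤ E / 2` bounds `(G + 1) t²`
by `t E`.
-/

namespace MeasureTheory

variable {Ω : Type*} [MeasurableSpace Ω]

theorem setIntegral_union_le {μ : Measure Ω} {f : Ω → ℝ} {s t : Set Ω}
    (hs : IntegrableOn f s μ) (ht : IntegrableOn f t μ) (hf : 0 ≤ᵐ[μ] f) :
    ∫ x in s ∪ t, f x ∂μ ≤ ∫ x in s, f x ∂μ + ∫ x in t, f x ∂μ := by
  rw [← integral_add_measure hs ht]
  exact integral_mono_measure (Measure.restrict_union_le s t)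
    (ae_add_measure_iff.2 ⟨ae_restrict_of_ae hf, ae_restrict_of_ae hf⟩)
    (Integrable.add_measure hs ht)

theorem integrable_of_nonneg_of_le_one {μ : Measure Ω} [IsFiniteMeasure μ] {f : Ω → ℝ}
    (hf : Measurable f) (h0 : ∀ x, 0 ≤ f x) (h1 : ∀ x, f x ≤ 1) : Integrable f μ :=
  (integrable_const 1).mono' hf.aestronglyMeasurable
    (ae_of_all _ fun x => by rw [Real.norm_eq_abs, abs_of_nonneg (h0 x)]; exact h1 x)

theorem setIntegral_setOf_lt_le {μ : Measure Ω} [IsProbabilityMeasure μ] {f : Ω → ℝ}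
    (h0 : ∀ x, 0 ≤ f x) {α : ℝ} (hα : 0 ≤ α) :
    ∫ x in {x | f x < α}, f x ∂μ ≤ α :=
  calc ∫ x in {x | f x < α}, f x ∂μ
      ≤ ‖∫ x in {x | f x < α}, f x ∂μ‖ := le_norm_self _
    _ ≤ α * μ.real {x | f x < α} :=
        norm_setIntegral_le_of_norm_le_const (measure_lt_top _ _)
          fun x hx => by rw [Real.norm_of_nonneg (h0 x)]; exact le_of_lt hx
    _ ≤ α := mul_le_of_le_one_right hα measureReal_le_one

theorem setIntegral_setOf_gt_le_integral_exp_sq_mul {μ : Measure Ω} {f H : Ω → ℝ}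
    (hfi : Integrable f μ) (h1 : ∀ x, f x ≤ 1) (hH : Measurable H)
    (hint : Integrable (fun x => exp (H x ^ 2)) μ) {M : ℝ} (hM : 0 ≤ M) :
    ∫ x in {x | M < H x}, f x ∂μ ≤ (∫ x, exp (H x ^ 2) ∂μ) * exp (-M ^ 2) := by
  have hpt : ∀ x ∈ {x | M < H x}, f x ≤ exp (H x ^ 2) * exp (-M ^ 2) := fun x hx => by
    have hMH : M ^ 2 ≤ H x ^ 2 := pow_le_pow_left₀ hM (le_of_lt hx) 2
    rw [← exp_add]
    exact (h1 x).trans (one_le_exp (by linarith))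
  calc ∫ x in {x | M < H x}, f x ∂μ
      ≤ ∫ x in {x | M < H x}, exp (H x ^ 2) * exp (-M ^ 2) ∂μ :=
        setIntegral_mono_on hfi.integrableOn (hint.mul_const _).integrableOn
          (measurableSet_lt measurable_const hH) hpt
    _ = (∫ x in {x | M < H x}, exp (H x ^ 2) ∂μ) * exp (-M ^ 2) := integral_mul_const _ _
    _ ≤ (∫ x, exp (H x ^ 2) ∂μ) * exp (-M ^ 2) := mul_le_mul_of_nonneg_right
        (setIntegral_le_integral hint (ae_of_all _ fun x => (exp_pos _).le)) (exp_pos _).le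

theorem setIntegral_compl_sieve_le {μ : Measure Ω} [IsProbabilityMeasure μ] {f H : Ω → ℝ}
    (hf : Measurable f) (h0 : ∀ x, 0 ≤ f x) (h1 : ∀ x, f x ≤ 1) (hH : Measurable H)
    (hint : Integrable (fun x => exp (H x ^ 2)) μ) {M α : ℝ} (hM : 0 ≤ M) (hα : 0 ≤ α) :
    ∫ x in {x | H x ≤ M ∧ α ≤ f x}ᶜ, f x ∂μ ≤
      (∫ x, exp (H x ^ 2) ∂μ) * exp (-M ^ 2) + α := by
  have hfi : Integrable f μ := integrable_of_nonneg_of_le_one hf h0 h1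
  have hsub : {x | H x ≤ M ∧ α ≤ f x}ᶜ ⊆ {x | M < H x} ∪ {x | f x < α} := fun _ hx =>
    (not_and_or.1 hx).imp not_le.1 not_le.1
  calc ∫ x in {x | H x ≤ M ∧ α ≤ f x}ᶜ, f x ∂μ
      ≤ ∫ x in {x | M < H x} ∪ {x | f x < α}, f x ∂μ :=
        setIntegral_mono_set hfi.integrableOn (ae_of_all _ h0) hsub.eventuallyLE
    _ ≤ ∫ x in {x | M < H x}, f x ∂μ + ∫ x in {x | f x < α}, f x ∂μ :=
        setIntegral_union_le hfi.integrableOn hfi.integrableOn (ae_of_all _ h0)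
    _ ≤ _ := add_le_add (setIntegral_setOf_gt_le_integral_exp_sq_mul hfi h1 hH hint hM)
        (setIntegral_setOf_lt_le h0 hα)

end MeasureTheory

theorem add_mul_sq_le_mul_of_le_half_div_max {G E t : ℝ} (ht : 0 < t)
    (h : t ≤ 1 / 2 * E / max G 1) : G * t ^ 2 + t ^ 2 ≤ t * E := by
  rw [le_div_iff₀ (lt_of_lt_of_le one_pos (le_max_right G 1))] at h
  nlinarith [le_max_left G 1, le_max_right G 1]

theorem stmt6_general {Ω : Type*} [MeasurableSpace Ω]
    (ν : Measure Ω) [IsProbabilityMeasure ν]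
    (f : Ω → ℝ) (hf : Measurable f)
    (h0 : ∀ x, 0 ≤ f x) (h1 : ∀ x, f x ≤ 1)
    (hE : 0 < ∫ x, f x ∂ν)
    (Hnorm : Ω → ℝ) (hH : Measurable Hnorm)
    (hint : Integrable (fun x => exp ((Hnorm x) ^ 2)) ν)
    (G : ℝ) (hG : G = ∫ x, exp ((Hnorm x) ^ 2) ∂ν)
    (C : ℝ) (n : ℕ) (εn : ℝ)
    (hcond : exp (-(C * n * εn ^ 2)) ≤ (1/2) * (∫ x, f x ∂ν) / max G 1)
    (Mn αn : ℝ) (hMn : 0 < Mn) (hMn2 : Mn ^ 2 = 2 * C * n * εn ^ 2)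
    (hαn : αn = exp (-(2 * C * n * εn ^ 2))) :
    (∫ x in {x | Hnorm x ≤ Mn ∧ αn ≤ f x}ᶜ, f x ∂ν) / (∫ x, f x ∂ν) ≤
      exp (-(C * n * εn ^ 2)) := by
  set t := exp (-(C * n * εn ^ 2))
  have hsq : exp (-(2 * C * n * εn ^ 2)) = t ^ 2 := by
    rw [← exp_nat_mul]
    ring_nf
  have hα : αn = t ^ 2 := hαn.trans hsq
  have hM : exp (-Mn ^ 2) = t ^ 2 := by rw [← hsq, hMn2]
  rw [div_le_iff₀ hE]
  calc ∫ x in {x | Hnorm x ≤ Mn ∧ αn ≤ f x}ᶜ, f x ∂ν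
      ≤ G * t ^ 2 + t ^ 2 :=
        (setIntegral_compl_sieve_le hf h0 h1 hH hint hMn.le (hα ▸ sq_nonneg t)).trans_eq
          (by rw [← hG, hM, hα])
    _ ≤ t * ∫ x, f x ∂ν := add_mul_sq_le_mul_of_le_half_div_max (exp_pos _) hcond

/-- Sieve bound: with `Mₙ² = 2Cnεₙ²`, `αₙ = exp(−2Cnεₙ²)`, and
`Bₙ = {x : ‖x‖_H ≤ Mₙ ∧ f x ≥ αₙ}`, if `exp(−Cnεₙ²) ≤ (E/2)/max(G,1)`, then the tilted
mass of `Bₙᶜ` is at most `exp(−Cnεₙ²)`. -/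
theorem stmt6 {Ω : Type*} [MeasurableSpace Ω]
    (ν : Measure Ω) [IsProbabilityMeasure ν]
    (f : Ω → ℝ) (hf : Measurable f)
    (h0 : ∀ x, 0 ≤ f x) (h1 : ∀ x, f x ≤ 1)
    (hE : 0 < ∫ x, f x ∂ν)
    (Hnorm : Ω → ℝ) (hH : Measurable Hnorm)
    (hint : Integrable (fun x => exp ((Hnorm x) ^ 2)) ν)
    (G : ℝ) (hG : G = ∫ x, exp ((Hnorm x) ^ 2) ∂ν)
    (C : ℝ) (hC : 1 < C) (n : ℕ) (εn : ℝ) (hε : 0 < εn)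
    (hcond : exp (-(C * n * εn ^ 2)) ≤ (1/2) * (∫ x, f x ∂ν) / max G 1)
    (Mn αn : ℝ) (hMn : 0 < Mn) (hMn2 : Mn ^ 2 = 2 * C * n * εn ^ 2)
    (hαn : αn = exp (-(2 * C * n * εn ^ 2))) :
    (∫ x in {x | Hnorm x ≤ Mn ∧ αn ≤ f x}ᶜ, f x ∂ν) / (∫ x, f x ∂ν) ≤
      exp (-(C * n * εn ^ 2)) :=
  stmt6_general ν f hf h0 h1 hE Hnorm hH hint G hG C n εn hcond Mn αn hMn hMn2 hαn
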